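/- The map sending an abstract loopy string w to the snake multigraph G_w — obtained from the abstract snake graph of the underlying abstract string of w (forgetting loops) by doubling all boundary edges of every tile whose vertex carries a loop — is a bijection between the set of abstract loopy strings and the set of abstract good snake multigraphs. -/
import Mathlib


/-- Gluing direction for consecutive tiles of a snake graph. -/
inductive Dir : Type
  | east : Dir
  | north : Dir
deriving DecidableEq

/-- Flip a gluing direction. -/
def Dir.flip : Dir → Dir
  | .east => .north
  | .north => .east

/-- The standard bijection between abstract strings and abstract snake graphs, on the level
of the gluing data: the arrows of the string (`true` = direct, `false` = inverse) determine
the gluing directions of consecutive tiles.  The first tile is glued East if the first arrow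
is direct and North if it is inverse; thereafter, a zig-zag (two consecutive equal arrows)
alternates the direction while a straight piece (two consecutive distinct arrows) keeps it. -/
def stringToDirs : List Bool → List Dir
  | [] => []
  | a :: as => go (if a then .east else .north) a as
where
  /-- auxiliary recursion carrying the current direction and the previous arrow -/
  go (d : Dir) (prev : Bool) : List Bool → List Dir
    | [] => [d]
    | b :: bs => d :: go (if b = prev then d.flip else d) b bs

lemma stringToDirs.go_length (d : Dir) (prev : Bool) (l : List Bool) :
    (stringToDirs.go d prev l).length = l.length + 1 := by
  induction l generalizing d prev with
  | nil => rfl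
  | cons b bs ih => simp [stringToDirs.go, ih]

lemma stringToDirs_length (l : List Bool) : (stringToDirs l).length = l.length := by
  cases l with
  | nil => rfl
  | cons a as => simp [stringToDirs, stringToDirs.go_length]

/-- A nonempty abstract loopy string: a word in the alphabet
{direct arrow, inverse arrow, loop, vertex} starting and ending with a vertex, with a vertex
between any two consecutive arrows and at most one loop at each vertex (each loop being
attached to a vertex).  It is encoded by its list of arrows (`true` = direct, `false` =
inverse) and, for each of its `arrows.length + 1` vertices, whether it carries a loop. -/
structure AbstractLoopyStringNE : Type where
  arrows : List Bool
  loops : List Bool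
  hlen : loops.length = arrows.length + 1

/-- An abstract loopy string: either the empty word or a nonempty abstract loopy string. -/
abbrev AbstractLoopyString : Type := Option AbstractLoopyStringNE

/-- A nonempty abstract good snake multigraph: a snake multigraph in which, for each tile,
the boundary edges are either all single or all double.  It is encoded by the underlying
abstract snake graph (the list of gluing directions, giving `dirs.length + 1` tiles)
together with, for each tile, whether its boundary edges are doubled. -/
structure GoodSnakeMultigraphNE : Type where
  dirs : List Dir
  doubledTiles : List Bool
  hlen : doubledTiles.length = dirs.length + 1

/-- An abstract good snake multigraph: either the empty graph or a nonempty one. -/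
abbrev AbstractGoodSnakeMultigraph : Type := Option GoodSnakeMultigraphNE

/-- The map sending an abstract loopy string `w` to the good snake multigraph `G_w`:
take the abstract snake graph of the underlying abstract string of `w` (forgetting the
loops) and double all boundary edges of every tile whose vertex carries a loop. -/
def loopyStringToMultigraph : AbstractLoopyString → AbstractGoodSnakeMultigraph
  | none => none
  | some w => some ⟨stringToDirs w.arrows, w.loops,
      by rw [w.hlen, stringToDirs_length]⟩

/-- Inverse of `stringToDirs.go`: recover the arrows from the gluing directions. -/
def dirsInv (prev : Bool) (d : Dir) : List Dir → List Bool
  | [] => []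
  | d' :: ds => (if d' = d then !prev else prev) ::
      dirsInv (if d' = d then !prev else prev) d' ds

/-- Inverse of `stringToDirs`. -/
def dirsToString : List Dir → List Bool
  | [] => []
  | d :: ds => (d = .east) :: dirsInv (d = .east) d ds

lemma stringToDirs.go_cons (d : Dir) (prev : Bool) (l : List Bool) :
    stringToDirs.go d prev l = d :: (stringToDirs.go d prev l).tail := by
  cases l <;> rfl

lemma Dir.flip_ne (d : Dir) : d.flip ≠ d := by cases d <;> simp [Dir.flip]

lemma dirsInv_go (l : List Bool) : ∀ (prev : Bool) (d : Dir),
    dirsInv prev d ((stringToDirs.go d prev l).tail) = l := by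
  induction l with
  | nil => intro prev d; rfl
  | cons b bs ih =>
    intro prev d
    show dirsInv prev d (stringToDirs.go (if b = prev then d.flip else d) b bs) = b :: bs
    rw [stringToDirs.go_cons (if b = prev then d.flip else d) b bs]
    by_cases hb : b = prev
    · simp [dirsInv, hb, Dir.flip_ne d, ih]
    · have hnb : b = !prev := by cases b <;> cases prev <;> simp_all
      subst hnb
      simp [dirsInv, hb, ih]

lemma go_dirsInv (ds : List Dir) : ∀ (prev : Bool) (d : Dir),
    stringToDirs.go d prev (dirsInv prev d ds) = d :: ds := by
  induction ds with
  | nil => intro prev d; rfl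
  | cons d' ds ih =>
    intro prev d
    by_cases hd : d' = d
    · subst hd
      simp [dirsInv, stringToDirs.go, ih]
    · have hflip : d.flip = d' := by cases d <;> cases d' <;> simp_all [Dir.flip]
      simp [dirsInv, hd, stringToDirs.go, hflip, ih]

lemma dirsToString_stringToDirs (l : List Bool) : dirsToString (stringToDirs l) = l := by
  cases l with
  | nil => rfl
  | cons a as =>
    show dirsToString (stringToDirs.go (if a then .east else .north) a as) = a :: as
    rw [stringToDirs.go_cons]
    have h1 : (decide ((if a then Dir.east else Dir.north) = Dir.east)) = a := by
      cases a <;> simp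
    show _ :: dirsInv _ _ _ = a :: as
    rw [h1, dirsInv_go as a (if a then .east else .north)]

lemma stringToDirs_dirsToString (ds : List Dir) : stringToDirs (dirsToString ds) = ds := by
  cases ds with
  | nil => rfl
  | cons d rest =>
    show stringToDirs ((d = .east : Bool) :: dirsInv (d = .east) d rest) = d :: rest
    have h1 : (if (d = .east : Bool) then Dir.east else Dir.north) = d := by
      cases d <;> simp
    show stringToDirs.go _ _ _ = _
    rw [h1, go_dirsInv rest (d = .east) d]

lemma dirsToString_length (ds : List Dir) : (dirsToString ds).length = ds.length := by
  conv_rhs => rw [← stringToDirs_dirsToString ds]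
  rw [stringToDirs_length]

/-- The inverse map. -/
def multigraphToLoopyString : AbstractGoodSnakeMultigraph → AbstractLoopyString
  | none => none
  | some g => some ⟨dirsToString g.dirs, g.doubledTiles,
      by rw [g.hlen, dirsToString_length]⟩

/-- The map `w ↦ G_w` is a bijection between the set of abstract loopy
strings and the set of abstract good snake multigraphs. -/
theorem loopyStringToMultigraph_bijective :
    Function.Bijective loopyStringToMultigraph := by
  have hleft : Function.LeftInverse multigraphToLoopyString loopyStringToMultigraph := by
    intro w
    cases w with
    | none => rfl
    | some w =>
      simp only [loopyStringToMultigraph, multigraphToLoopyString, Option.some.injEq]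
      cases w with
      | mk arrows loops hlen =>
        simp [dirsToString_stringToDirs]
  have hright : Function.RightInverse multigraphToLoopyString loopyStringToMultigraph := by
    intro g
    cases g with
    | none => rfl
    | some g =>
      simp only [loopyStringToMultigraph, multigraphToLoopyString, Option.some.injEq]
      cases g with
      | mk dirs dt hlen =>
        simp [stringToDirs_dirsToString]
  exact ⟨hleft.injective, hright.surjective⟩
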